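/- For φ ∈ (0, π), the function B_c(φ) = |1+(cos φ−1)e^{2πi/3}| is strictly increasing with range (1, √7), and the argument ψ_c(φ) = arg(1+(cos φ−1)e^{2πi/3}) is strictly decreasing with range (−arctan(√3/2), 0). -/

import Mathlib

open Real Set

noncomputable def α₂ (φ : ℝ) : ℂ :=
  1 + ((Real.cos φ : ℂ) - 1) * Complex.exp (2 * Real.pi * Complex.I / 3)

noncomputable def Bc (φ : ℝ) : ℝ := ‖α₂ φ‖

noncomputable def ψc (φ : ℝ) : ℝ := (α₂ φ).arg

/-!
With `c = cos φ` we have `α₂ φ = ((3 - c) - i √3 (1 - c)) / 2`, so both quantities are functions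
of `c`, which decreases from `1` to `-1` on `[0, π]`: `Bc φ = √(3 - 3c + c²)` decreases in
`c ≤ 3/2`, and, the real part being positive, `ψc φ = -arctan (√3 (1 - c) / (3 - c))` increases
in `c < 3`. A continuous strictly monotone function maps `(0, π)` onto the open interval between
its values at the endpoints.
-/

theorem Complex.arg_eq_arctan_of_re_pos {z : ℂ} (h : 0 < z.re) :
    z.arg = Real.arctan (z.im / z.re) := by
  have hz := abs_lt.mp (abs_arg_lt_pi_div_two_iff.mpr (Or.inl h))
  rw [← tan_arg, Real.arctan_tan hz.1 hz.2]

theorem Real.cos_two_pi_div_three : cos (2 * π / 3) = -1 / 2 := by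
  rw [show 2 * π / 3 = π - π / 3 by ring, cos_pi_sub, cos_pi_div_three]
  ring

theorem Real.sin_two_pi_div_three : sin (2 * π / 3) = √3 / 2 := by
  rw [show 2 * π / 3 = π - π / 3 by ring, sin_pi_sub, sin_pi_div_three]

lemma Complex.exp_two_pi_mul_I_div_three :
    Complex.exp (2 * π * Complex.I / 3) = ⟨-1 / 2, √3 / 2⟩ := by
  apply Complex.ext <;>
    simp [Complex.exp_re, Complex.exp_im, cos_two_pi_div_three, sin_two_pi_div_three]

lemma α₂_re (φ : ℝ) : (α₂ φ).re = (3 - cos φ) / 2 := by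
  simp only [α₂, Complex.exp_two_pi_mul_I_div_three, Complex.add_re, Complex.one_re,
    Complex.mul_re, Complex.sub_re, Complex.sub_im, Complex.ofReal_re, Complex.ofReal_im,
    Complex.one_im]
  ring

lemma α₂_im (φ : ℝ) : (α₂ φ).im = -(√3 * (1 - cos φ)) / 2 := by
  simp only [α₂, Complex.exp_two_pi_mul_I_div_three, Complex.add_im, Complex.one_im,
    Complex.mul_im, Complex.sub_re, Complex.sub_im, Complex.ofReal_re, Complex.ofReal_im,
    Complex.one_re]
  ring

lemma Bc_eq (φ : ℝ) : Bc φ = √(3 - 3 * cos φ + cos φ ^ 2) := by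
  rw [Bc, Complex.norm_def, Complex.normSq_apply, α₂_re, α₂_im]
  congr 1
  linear_combination (1 - cos φ) ^ 2 / 4 * Real.sq_sqrt (show (0:ℝ) ≤ 3 by norm_num)

lemma ψc_eq (φ : ℝ) : ψc φ = -arctan (√3 * (1 - cos φ) / (3 - cos φ)) := by
  have hre : 0 < (α₂ φ).re := by rw [α₂_re]; linarith [cos_le_one φ]
  rw [ψc, Complex.arg_eq_arctan_of_re_pos hre, ← arctan_neg, α₂_re, α₂_im]
  congr 1
  field_simp

lemma strictAntiOn_sqrt_three_sub_three_mul_add_sq :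
    StrictAntiOn (fun c : ℝ => √(3 - 3 * c + c ^ 2)) (Iic (3 / 2)) := by
  intro x _ y (hy : y ≤ 3 / 2) hxy
  exact Real.sqrt_lt_sqrt (by nlinarith [sq_nonneg (y - 3 / 2)]) (by nlinarith)

lemma strictMonoOn_neg_arctan_sqrt_three_mul_div :
    StrictMonoOn (fun c : ℝ => -arctan (√3 * (1 - c) / (3 - c))) (Iio 3) := by
  intro x hx y hy hxy
  have hx : 0 < 3 - x := sub_pos.mpr hx
  have hy : 0 < 3 - y := sub_pos.mpr hy
  refine neg_lt_neg (arctan_strictMono ?_)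
  rw [mul_div_assoc, mul_div_assoc]
  refine mul_lt_mul_of_pos_left ?_ (by positivity)
  rw [div_lt_div_iff₀ hy hx]
  nlinarith

lemma strictMonoOn_Bc : StrictMonoOn Bc (Icc 0 π) := by
  rw [show Bc = (fun c => √(3 - 3 * c + c ^ 2)) ∘ cos from funext Bc_eq]
  exact strictAntiOn_sqrt_three_sub_three_mul_add_sq.comp strictAntiOn_cos
    fun φ _ => (cos_le_one φ).trans (by norm_num)

lemma strictAntiOn_ψc : StrictAntiOn ψc (Icc 0 π) := by
  rw [show ψc = (fun c => -arctan (√3 * (1 - c) / (3 - c))) ∘ cos from funext ψc_eq]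
  exact strictMonoOn_neg_arctan_sqrt_three_mul_div.comp_strictAntiOn strictAntiOn_cos
    fun φ _ => (cos_le_one φ).trans_lt (by norm_num)

lemma continuous_Bc : Continuous Bc :=
  continuous_norm.comp (by unfold α₂; fun_prop)

lemma continuous_ψc : Continuous ψc := by
  rw [show ψc = _ from funext ψc_eq]
  refine (continuous_arctan.comp (Continuous.div (by fun_prop) (by fun_prop) ?_)).neg
  exact fun φ => (sub_pos.mpr ((cos_le_one φ).trans_lt (by norm_num))).ne'

theorem Bc_psi_c_monotone_and_range :
    StrictMonoOn Bc (Ioo 0 π) ∧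
      Bc '' Ioo 0 π = Ioo 1 (Real.sqrt 7) ∧
      StrictAntiOn ψc (Ioo 0 π) ∧
      ψc '' Ioo 0 π = Ioo (-Real.arctan (Real.sqrt 3 / 2)) 0 := by
  have hBc0 : Bc 0 = 1 := by norm_num [Bc_eq]
  have hBcπ : Bc π = √7 := by norm_num [Bc_eq]
  have hψc0 : ψc 0 = 0 := by norm_num [ψc_eq]
  have hψcπ : ψc π = -arctan (√3 / 2) := by norm_num [ψc_eq]; ring_nf
  refine ⟨strictMonoOn_Bc.mono Ioo_subset_Icc_self, ?_,
    strictAntiOn_ψc.mono Ioo_subset_Icc_self, ?_⟩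
  · rw [continuous_Bc.continuousOn.image_Ioo_of_strictMonoOn pi_pos.le strictMonoOn_Bc,
      hBc0, hBcπ]
  · rw [continuous_ψc.continuousOn.image_Ioo_of_strictAntiOn pi_pos.le strictAntiOn_ψc,
      hψc0, hψcπ]
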